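/- arXiv:1411.5139 — 6 statements merged into one kernel-verified Lean document; each statement's English description precedes it below -/
import Mathlib

section
/- Let A be a unital complex Banach algebra (not necessarily commutative) and let a ∈ A. Suppose that 0 belongs to the unbounded connected component of ℂ \ σ_A(a), where σ_A(a) is the spectrum of a in A. Then there exists b ∈ A such that e^b = a. -/
/-!
In a commutative Banach algebra the exponentials form a subgroup of the units which is open, by
the inverse function theorem for `exp` at `0`, hence clopen; so a connected set of units that
contains one exponential consists of exponentials. Pick `l` in the component of `0` in the
resolvent set with `‖l‖ > ‖a‖ ‖1‖`. The set `{a - l' | l' in that component}` joins `a` to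
`a - l`, and `{w a - l | |w| ≤ 1}` joins `a - l` to the scalar `-l = exp (log (-l))`.
For general `A` one works in the bicommutant of `a`: it is closed and commutative, and an element
of a centralizer is invertible there as soon as it is invertible in `A`, so the spectrum of `a`
does not change.
-/

open NormedSpace Topology

theorem range_exp_mem_nhds_one (𝕂 : Type*) {B : Type*} [RCLike 𝕂] [NormedRing B]
    [NormedAlgebra 𝕂 B] [CompleteSpace B] : Set.range (exp : B → B) ∈ 𝓝 1 := by
  have h := (hasStrictFDerivAt_exp_zero (𝕂 := 𝕂) (𝔸 := B)).map_nhds_eq_of_equiv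
    (f' := ContinuousLinearEquiv.refl 𝕂 B)
  rw [exp_zero] at h
  exact h ▸ Filter.range_mem_map

section ExpUnits

variable (B : Type*) [NormedCommRing B] [NormedAlgebra ℚ B] [CompleteSpace B]

def expUnits : Subgroup Bˣ where
  carrier := Units.val ⁻¹' Set.range (exp : B → B)
  one_mem' := ⟨0, exp_zero⟩
  mul_mem' := by
    rintro u v ⟨b, hb⟩ ⟨c, hc⟩
    exact ⟨b + c, by rw [exp_add, hb, hc, Units.val_mul]⟩
  inv_mem' := by
    rintro u ⟨b, hb⟩
    refine ⟨-b, Eq.symm (Units.inv_eq_of_mul_eq_one_left ?_)⟩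
    rw [← hb, ← exp_add, neg_add_cancel, exp_zero]

theorem isClopen_expUnits (𝕂 : Type*) [RCLike 𝕂] [NormedAlgebra 𝕂 B] :
    IsClopen (expUnits B : Set Bˣ) := by
  have hnhds : Set.range exp ∈ 𝓝 ((1 : Bˣ) : B) := by
    rw [Units.val_one]; exact range_exp_mem_nhds_one 𝕂
  have hopen : IsOpen (expUnits B : Set Bˣ) :=
    (expUnits B).isOpen_of_mem_nhds (Units.continuous_val.continuousAt.preimage_mem_nhds hnhds)
  exact ⟨(expUnits B).isClosed_of_isOpen hopen, hopen⟩

variable {B}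

theorem IsPreconnected.subset_range_exp (𝕂 : Type*) [RCLike 𝕂] [NormedAlgebra 𝕂 B] {S : Set B}
    (hS : IsPreconnected S) (hunit : ∀ x ∈ S, IsUnit x) (hexp : (S ∩ Set.range exp).Nonempty) :
    S ⊆ Set.range exp := by
  have hSval : S ⊆ Set.range ((↑) : Bˣ → B) := fun x hx => hunit x hx
  have hP : IsPreconnected ((↑) ⁻¹' S : Set Bˣ) := by
    rw [← Units.isOpenEmbedding_val.isInducing.isPreconnected_image,
      Set.image_preimage_eq_of_subset hSval]
    exact hS
  obtain ⟨_, hxS, b, hb⟩ := hexp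
  obtain ⟨u, rfl⟩ := hSval hxS
  have hPexp : (↑) ⁻¹' S ⊆ (expUnits B : Set Bˣ) :=
    hP.subset_isClopen (isClopen_expUnits B 𝕂)
      ⟨u, hxS, show (u : B) ∈ Set.range exp from ⟨b, hb⟩⟩
  intro x hx
  obtain ⟨v, rfl⟩ := hSval hx
  exact hPexp hx

end ExpUnits

namespace Subalgebra

theorem isUnit_centralizer_iff {R A : Type*} [CommSemiring R] [Semiring A] [Algebra R A]
    {s : Set A} {x : centralizer R s} : IsUnit x ↔ IsUnit (x : A) := by
  refine ⟨fun h => h.map (centralizer R s).val, fun ⟨u, hu⟩ => ?_⟩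
  have hinv : (↑u⁻¹ : A) ∈ centralizer R s := fun c hc =>
    (show Commute c u from hu ▸ x.2 c hc).units_inv_right
  exact ⟨⟨x, ⟨_, hinv⟩, Subtype.ext (by simp [← hu]), Subtype.ext (by simp [← hu])⟩, rfl⟩

theorem spectrum_centralizer {R A : Type*} [CommRing R] [Ring A] [Algebra R A]
    (s : Set A) (x : centralizer R s) : spectrum R x = spectrum R (x : A) := by
  ext r
  exact not_congr isUnit_centralizer_iff

end Subalgebra

theorem spectrum.isUnit_sub_algebraMap_of_notMem {R A : Type*} [CommSemiring R] [Ring A]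
    [Algebra R A] {a : A} {r : R} (h : r ∉ spectrum R a) : IsUnit (a - algebraMap R A r) := by
  simpa using (spectrum.notMem_iff.1 h).neg

theorem mem_range_exp_of_not_isBounded_connectedComponentIn {B : Type*} [NormedCommRing B]
    [NormedAlgebra ℂ B] [CompleteSpace B] {a : B} (h0 : (0 : ℂ) ∈ (spectrum ℂ a)ᶜ)
    (hunb : ¬ Bornology.IsBounded (connectedComponentIn (spectrum ℂ a)ᶜ 0)) :
    a ∈ Set.range exp := by
  let _ : NormedAlgebra ℚ B := NormedAlgebra.restrictScalars ℚ ℂ B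
  set C := connectedComponentIn (spectrum ℂ a)ᶜ 0
  obtain ⟨l, hlC, hl⟩ : ∃ l ∈ C, ‖a‖ * ‖(1 : B)‖ < ‖l‖ := by
    by_contra! h
    exact hunb (isBounded_iff_forall_norm_le.2 ⟨_, h⟩)
  have hl0 : l ≠ 0 := norm_pos_iff.1 ((by positivity : 0 ≤ ‖a‖ * ‖(1 : B)‖).trans_lt hl)
  let S := (fun z => a - algebraMap ℂ B z) '' C
  let T := (fun w : ℂ => w • a - algebraMap ℂ B l) '' Metric.closedBall 0 1
  have hS : IsPreconnected S := isPreconnected_connectedComponentIn.image _ (by fun_prop)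
  have hT : IsPreconnected T := (convex_closedBall 0 1).isPreconnected.image _ (by fun_prop)
  have hST : IsPreconnected (S ∪ T) := hS.union _ ⟨l, hlC, rfl⟩ ⟨1, by simp, by simp⟩ hT
  refine hST.subset_range_exp ℂ ?_ ?_ (Or.inl ⟨0, mem_connectedComponentIn h0, by simp⟩)
  · rintro _ (⟨z, hz, rfl⟩ | ⟨w, hw, rfl⟩)
    · exact spectrum.isUnit_sub_algebraMap_of_notMem (connectedComponentIn_subset _ _ hz)
    · refine spectrum.isUnit_sub_algebraMap_of_notMem
        (not_not.2 (spectrum.mem_resolventSet_of_norm_lt_mul ?_))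
      calc ‖w • a‖ * ‖(1 : B)‖ ≤ ‖a‖ * ‖(1 : B)‖ := by
            gcongr
            rw [norm_smul]
            exact mul_le_of_le_one_left (norm_nonneg a) (mem_closedBall_zero_iff.1 hw)
        _ < ‖l‖ := hl
  · refine ⟨-algebraMap ℂ B l, Or.inr ⟨0, by simp, by simp⟩,
      algebraMap ℂ B (Complex.log (-l)), ?_⟩
    rw [← algebraMap_exp_comm, ← Complex.exp_eq_exp_ℂ, Complex.exp_log (neg_ne_zero.2 hl0),
      map_neg]

theorem stmt4_general {A : Type*} [NormedRing A] [NormedAlgebra ℂ A]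
    [CompleteSpace A] (a : A)
    (h0 : (0 : ℂ) ∈ (spectrum ℂ a)ᶜ)
    (hunb : ¬ Bornology.IsBounded (connectedComponentIn (spectrum ℂ a)ᶜ 0)) :
    ∃ b : A, NormedSpace.exp b = a := by
  let B := Subalgebra.centralizer ℂ (Subalgebra.centralizer ℂ {a} : Set A)
  let _ : NormedCommRing B :=
    { mul_comm := fun x y => Subtype.ext <|
        Set.centralizer_centralizer_comm_of_comm (by simp) _ x.2 _ y.2 }
  have : CompleteSpace B := (Set.isClosed_centralizer _).completeSpace_coe
  let a' : B := ⟨a, Set.subset_centralizer_centralizer rfl⟩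
  have hspec : spectrum ℂ a' = spectrum ℂ a := Subalgebra.spectrum_centralizer _ a'
  obtain ⟨b, hb⟩ := mem_range_exp_of_not_isBounded_connectedComponentIn (a := a')
    (hspec ▸ h0) (hspec ▸ hunb)
  let _ : NormedAlgebra ℚ A := NormedAlgebra.restrictScalars ℚ ℂ A
  let _ : NormedAlgebra ℚ B := NormedAlgebra.restrictScalars ℚ ℂ B
  exact ⟨b, (map_exp B.val continuous_subtype_val b).symm.trans (congrArg B.val hb)⟩

/-- If `A` is a unital complex Banach algebra, `a ∈ A`, and `0` belongs to the unbounded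
connected component of `ℂ \ σ_A(a)`, then there exists `b ∈ A` with `e^b = a`. -/
theorem stmt4 {A : Type*} [NormedRing A] [NormOneClass A] [NormedAlgebra ℂ A]
    [CompleteSpace A] (a : A)
    (h0 : (0 : ℂ) ∈ (spectrum ℂ a)ᶜ)
    (hunb : ¬ Bornology.IsBounded (connectedComponentIn (spectrum ℂ a)ᶜ 0)) :
    ∃ b : A, NormedSpace.exp b = a :=
  stmt4_general a h0 hunb
end

section
/- Let 𝓡 be a unital real Banach algebra (not necessarily commutative) and let x ∈ 𝓡. Suppose that 0 belongs to the unbounded connected component of ℂ \ σ*_𝓡(x). Then x ∈ exp 𝓡 if and only if x = y² for some y ∈ 𝓡. -/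
/-!
Pass to the bicommutant of `y`: it is a closed commutative subalgebra which contains the inverse
of each of its elements invertible in `𝓡`, so `Q(λ) = x² - 2 Re λ x + |λ|²` stays invertible
there for `λ` in the component `K` of `0`. In a commutative Banach algebra the exponentials form
an open subgroup of the units, so values of `Q` along the connected set `K` differ by
exponentials. As `K` is unbounded it contains some `λ` with `Q(λ) = |λ|² (1 + o(1))` an
exponential; hence `y⁴ = x² = Q(0) = exp b`. Then `v = y exp(-b/4)` satisfies `v⁴ = 1`, and
`v² = exp(π u)` with `u = (v - v³)/2`, so `x = exp(π u + b/2)`.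
-/

/-- The real-symmetric spectrum of an element `x` of a unital real algebra `R`:
the set of `λ ∈ ℂ` such that `x² - 2(Re λ)·x + |λ|²·1` is not invertible in `R`. -/
def realSymSpectrum {R : Type*} [Ring R] [Algebra ℝ R] (x : R) : Set ℂ :=
  {lam : ℂ | ¬ IsUnit (x ^ 2 - (2 * lam.re) • x + (‖lam‖ ^ 2) • (1 : R))}

open NormedSpace Set Filter Topology Bornology

section Quadratic

variable {A : Type*} [Ring A] [Algebra ℝ A]

noncomputable def realSymQuadratic (x : A) (μ : ℂ) : A :=
  x ^ 2 - (2 * μ.re) • x + (‖μ‖ ^ 2) • (1 : A)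

theorem mem_compl_realSymSpectrum {x : A} {μ : ℂ} :
    μ ∈ (realSymSpectrum x)ᶜ ↔ IsUnit (realSymQuadratic x μ) :=
  not_not

theorem realSymQuadratic_zero (x : A) : realSymQuadratic x 0 = x ^ 2 := by
  simp [realSymQuadratic]

theorem map_realSymQuadratic {B : Type*} [Ring B] [Algebra ℝ B] (f : A →ₐ[ℝ] B) (x : A) (μ : ℂ) :
    f (realSymQuadratic x μ) = realSymQuadratic (f x) μ := by
  simp [realSymQuadratic]

end Quadratic

section NormedRing

variable {B : Type*} [NormedRing B] [NormedAlgebra ℝ B]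

theorem continuous_realSymQuadratic (x : B) : Continuous (realSymQuadratic x) := by
  unfold realSymQuadratic
  fun_prop

theorem tendsto_inv_norm_sq_smul_realSymQuadratic (x : B) :
    Tendsto (fun μ => (‖μ‖ ^ 2)⁻¹ • realSymQuadratic x μ) (cobounded ℂ) (𝓝 1) := by
  -- for `μ ≠ 0` the function is the reversed quadratic below, evaluated at `μ⁻¹`
  have hcont : Tendsto (fun w : ℂ => ‖w‖ ^ 2 • x ^ 2 - (2 * w.re) • x + 1) (𝓝 0) (𝓝 1) := by
    convert (Continuous.tendsto (by fun_prop) 0 :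
      Tendsto (fun w : ℂ => ‖w‖ ^ 2 • x ^ 2 - (2 * w.re) • x + 1) _ _) using 2
    simp
  refine (hcont.comp tendsto_inv₀_cobounded).congr' ?_
  filter_upwards [eventually_ne_cobounded 0] with μ hμ
  have hμ' : ‖μ‖ ^ 2 ≠ 0 := by positivity
  simp only [Function.comp_apply, realSymQuadratic, smul_add, smul_sub, smul_smul, norm_inv,
    inv_pow, Complex.inv_re, ← Complex.sq_norm, inv_mul_cancel₀ hμ', one_smul]
  congr 3
  ring

variable [CompleteSpace B]

theorem range_exp_mem_nhds_one_s8 : range (exp : B → B) ∈ 𝓝 1 := by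
  let +nondep : NormedAlgebra ℚ B := .restrictScalars ℚ ℝ B
  have h := (hasStrictFDerivAt_exp_zero (𝕂 := ℝ) (𝔸 := B)).map_nhds_eq_of_equiv
    (f' := ContinuousLinearEquiv.refl ℝ B)
  rw [exp_zero] at h
  exact h ▸ range_mem_map

theorem eventually_exists_exp_mul_eq (u : Bˣ) : ∀ᶠ z in 𝓝 (u : B), ∃ c, exp c * (u : B) = z := by
  have h : Tendsto (fun z : B => z * ↑u⁻¹) (𝓝 ↑u) (𝓝 1) := by
    simpa using (continuous_mul_const (↑u⁻¹ : B)).tendsto (u : B)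
  filter_upwards [h range_exp_mem_nhds_one_s8] with z ⟨c, hc⟩
  exact ⟨c, by rw [hc, Units.inv_mul_cancel_right]⟩

theorem exists_exp_eq_smul_exp {r : ℝ} (hr : 0 < r) (c : B) : ∃ a, exp a = r • exp c := by
  let +nondep : NormedAlgebra ℚ B := .restrictScalars ℚ ℝ B
  refine ⟨c + algebraMap ℝ B (Real.log r), ?_⟩
  rw [exp_add_of_commute (Algebra.commute_algebraMap_right _ _), ← algebraMap_exp_comm,
    ← Real.exp_eq_exp_ℝ, Real.exp_log hr, Algebra.algebraMap_eq_smul_one, mul_smul_one]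

theorem eq_exp_smul_of_hasDerivAt {u : B} {c : ℝ → B} (hc : ∀ t, HasDerivAt c (u * c t) t)
    (hc0 : c 0 = 1) (t : ℝ) : c t = exp (t • u) := by
  let +nondep : NormedAlgebra ℚ B := .restrictScalars ℚ ℝ B
  have hderiv : ∀ s, HasDerivAt (fun s : ℝ => exp (s • -u) * c s) 0 s := fun s =>
    ((hasDerivAt_exp_smul_const (-u) s).mul (hc s)).congr_deriv (by simp [mul_assoc])
  have hconst : exp (t • -u) * c t = 1 := by
    simpa [hc0] using is_const_of_deriv_eq_zero (fun s => (hderiv s).differentiableAt)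
      (fun s => (hderiv s).deriv) t 0
  have hinv : exp (t • u) * exp (t • -u) = 1 := by
    rw [← exp_add_of_commute ((Commute.refl u).neg_right.smul_left t |>.smul_right t)]
    simp
  calc c t = exp (t • u) * exp (t • -u) * c t := by rw [hinv, one_mul]
    _ = exp (t • u) := by rw [mul_assoc, hconst, mul_one]

theorem exp_smul_eq_of_mul_self_eq_neg {u p : B} (hu : u * u = -p) (hup : u * p = u) (t : ℝ) :
    exp (t • u) = 1 - p + Real.cos t • p + Real.sin t • u := by
  refine (eq_exp_smul_of_hasDerivAt (c := fun t => 1 - p + Real.cos t • p + Real.sin t • u)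
    (fun s => ?_) (by simp) t).symm
  refine ((((Real.hasDerivAt_cos s).smul_const p).const_add (1 - p)).add
    ((Real.hasDerivAt_sin s).smul_const u)).congr_deriv ?_
  simp only [mul_add, mul_sub, mul_one, mul_smul_comm, hu, hup]
  module

end NormedRing

section NormedCommRing

variable {B : Type*} [NormedCommRing B] [NormedAlgebra ℝ B] [CompleteSpace B]

theorem IsPreconnected.exists_exp_mul_eq {X : Type*} [TopologicalSpace X] {s : Set X}
    (hs : IsPreconnected s) {f : X → B} (hf : ContinuousOn f s) (hunit : ∀ x ∈ s, IsUnit (f x))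
    {x y : X} (hx : x ∈ s) (hy : y ∈ s) : ∃ c, exp c * f x = f y := by
  let +nondep : NormedAlgebra ℚ B := .restrictScalars ℚ ℝ B
  refine hs.induction₂ (fun x y => ∃ c, exp c * f x = f y) (fun z hz => ?_)
    (fun _ _ _ _ _ _ ⟨c, hc⟩ ⟨d, hd⟩ => ⟨d + c, by rw [exp_add, mul_assoc, hc, hd]⟩)
    (fun _ _ _ _ ⟨c, hc⟩ => ⟨-c, by rw [← hc, ← mul_assoc, ← exp_add, neg_add_cancel,
      exp_zero, one_mul]⟩) hx hy
  obtain ⟨u, hu⟩ := hunit z hz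
  exact (hf z hz).eventually (hu ▸ eventually_exists_exp_mul_eq u)

theorem exists_exp_eq_sq_of_isPreconnected (x : B) {K : Set ℂ} (hK : IsPreconnected K)
    (h0 : 0 ∈ K) (hKb : ¬IsBounded K) (hunit : ∀ μ ∈ K, IsUnit (realSymQuadratic x μ)) :
    ∃ b, exp b = x ^ 2 := by
  let +nondep : NormedAlgebra ℚ B := .restrictScalars ℚ ℝ B
  have hfreq : ∃ᶠ μ in cobounded ℂ, μ ∈ K := hKb
  obtain ⟨μ, hμK, ⟨c, hc⟩, hμ⟩ := (hfreq.and_eventually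
    (((tendsto_inv_norm_sq_smul_realSymQuadratic x).eventually_mem range_exp_mem_nhds_one_s8).and
      (eventually_ne_cobounded 0))).exists
  obtain ⟨a, ha⟩ := exists_exp_eq_smul_exp (by positivity : 0 < ‖μ‖ ^ 2) c
  obtain ⟨d, hd⟩ := hK.exists_exp_mul_eq (continuous_realSymQuadratic x).continuousOn hunit hμK h0
  refine ⟨d + a, ?_⟩
  rw [exp_add, ha, hc, smul_inv_smul₀ (by positivity), hd, realSymQuadratic_zero]

theorem exists_exp_eq_sq_of_pow_four_eq_one {v : B} (hv : v ^ 4 = 1) : ∃ a, exp a = v ^ 2 := by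
  -- `p` is the idempotent with `v² = 1 - 2p`, and `u = v p` squares to `-p`
  set p : B := (2⁻¹ : ℝ) • (1 - v ^ 2) with hp
  set u : B := (2⁻¹ : ℝ) • (v - v ^ 3) with hu
  have huu : u * u = -p := by
    have h : (v - v ^ 3) * (v - v ^ 3) = (2 : ℝ) • (v ^ 2 - 1) := by
      rw [two_smul]; linear_combination (v ^ 2 - 2) * hv
    rw [hu, hp, smul_mul_smul_comm, h]
    module
  have hup : u * p = u := by
    have h : (v - v ^ 3) * (1 - v ^ 2) = (2 : ℝ) • (v - v ^ 3) := by
      rw [two_smul]; linear_combination v * hv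
    rw [hu, hp, smul_mul_smul_comm, h]
    module
  refine ⟨Real.pi • u, ?_⟩
  rw [exp_smul_eq_of_mul_self_eq_neg huu hup, Real.cos_pi, Real.sin_pi, hp]
  module

theorem exists_exp_eq_sq_of_exp_eq_pow_four {y b : B} (h : exp b = y ^ 4) :
    ∃ a, exp a = y ^ 2 := by
  let +nondep : NormedAlgebra ℚ B := .restrictScalars ℚ ℝ B
  obtain ⟨a, ha⟩ := exists_exp_eq_sq_of_pow_four_eq_one (v := y * exp ((-4⁻¹ : ℝ) • b)) (by
    rw [mul_pow, ← exp_nsmul, ← h, ← exp_add, show b + 4 • (-4⁻¹ : ℝ) • b = 0 by module,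
      exp_zero])
  refine ⟨a + (2⁻¹ : ℝ) • b, ?_⟩
  rw [exp_add, ha, mul_pow, ← exp_nsmul, mul_assoc, ← exp_add,
    show 2 • (-4⁻¹ : ℝ) • b + (2⁻¹ : ℝ) • b = 0 by module, exp_zero, mul_one]

end NormedCommRing

section Bicommutant

variable {R : Type*} [NormedRing R] [NormedAlgebra ℝ R]

theorem Subalgebra.isUnit_of_isUnit_coe_centralizer {s : Set R}
    {z : Subalgebra.centralizer ℝ s} (hz : IsUnit (z : R)) : IsUnit z := by
  obtain ⟨u, hu⟩ := hz
  have hinv : (↑u⁻¹ : R) ∈ Subalgebra.centralizer ℝ s := fun m hm =>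
    (hu ▸ z.2 m hm : Commute m u).units_inv_right
  exact ⟨⟨z, ⟨_, hinv⟩, Subtype.ext (by simp [← hu]), Subtype.ext (by simp [← hu])⟩, rfl⟩

abbrev bicommutant (y : R) : Subalgebra ℝ R :=
  Subalgebra.centralizer ℝ (Set.centralizer {y})

theorem self_mem_bicommutant (y : R) : y ∈ bicommutant y :=
  Set.subset_centralizer_centralizer rfl

noncomputable instance (y : R) : NormedCommRing (bicommutant y) where
  mul_comm a b := Subtype.ext <|
    Set.centralizer_centralizer_comm_of_comm (by simp) _ a.2 _ b.2

instance [CompleteSpace R] (y : R) : CompleteSpace (bicommutant y) :=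
  (Set.isClosed_centralizer _).completeSpace_coe

end Bicommutant

theorem stmt8_general {R : Type*} [NormedRing R] [NormedAlgebra ℝ R]
    [CompleteSpace R] (x : R)
    (hunb : ¬ Bornology.IsBounded (connectedComponentIn (realSymSpectrum x)ᶜ 0)) :
    (∃ a : R, NormedSpace.exp a = x) ↔ (∃ y : R, x = y ^ 2) := by
  let +nondep : NormedAlgebra ℚ R := .restrictScalars ℚ ℝ R
  refine ⟨fun ⟨a, ha⟩ => ⟨exp ((2⁻¹ : ℝ) • a), ?_⟩, fun ⟨y, hy⟩ => ?_⟩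
  · rw [← exp_nsmul, show 2 • (2⁻¹ : ℝ) • a = a by module, ha]
  have h0 : (0 : ℂ) ∈ connectedComponentIn (realSymSpectrum x)ᶜ 0 :=
    mem_connectedComponentIn (connectedComponentIn_nonempty_iff.mp (nonempty_of_not_isBounded hunb))
  let y' : bicommutant y := ⟨y, self_mem_bicommutant y⟩
  have hunit (μ : ℂ) (hμ : μ ∈ connectedComponentIn (realSymSpectrum x)ᶜ 0) :
      IsUnit (realSymQuadratic (y' ^ 2) μ) := by
    refine Subalgebra.isUnit_of_isUnit_coe_centralizer ?_
    rw [← Subalgebra.coe_val, map_realSymQuadratic, map_pow,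
      show (bicommutant y).val y' = y from rfl, ← hy]
    exact mem_compl_realSymSpectrum.mp (connectedComponentIn_subset _ _ hμ)
  obtain ⟨b, hb⟩ := exists_exp_eq_sq_of_isPreconnected (y' ^ 2) isPreconnected_connectedComponentIn
    h0 hunb hunit
  obtain ⟨a, ha⟩ := exists_exp_eq_sq_of_exp_eq_pow_four (hb.trans (pow_mul _ _ _).symm)
  let +nondep : NormedAlgebra ℚ (bicommutant y) := .restrictScalars ℚ ℝ _
  refine ⟨a, (map_exp (bicommutant y).val continuous_subtype_val a).symm.trans ?_⟩
  rw [ha, map_pow, hy]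
  rfl

/-- If `𝓡` is a unital real Banach algebra, `x ∈ 𝓡`, and `0` belongs to the unbounded
connected component of `ℂ \ σ*_𝓡(x)`, then `x ∈ exp 𝓡` iff `x = y²` for some `y ∈ 𝓡`. -/
theorem stmt8 {R : Type*} [NormedRing R] [NormOneClass R] [NormedAlgebra ℝ R]
    [CompleteSpace R] (x : R)
    (h0 : (0 : ℂ) ∈ (realSymSpectrum x)ᶜ)
    (hunb : ¬ Bornology.IsBounded (connectedComponentIn (realSymSpectrum x)ᶜ 0)) :
    (∃ a : R, NormedSpace.exp a = x) ↔ (∃ y : R, x = y ^ 2) :=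
  stmt8_general x hunb
end

section
/- Let M ∈ M_3(ℝ) be the diagonal matrix with diagonal entries (-1, -2, 1). Then there is no L ∈ M_3(ℝ) with e^L = M, and there is no L ∈ M_3(ℝ) with e^L = -M. -/
/-!
Since `L` commutes with `exp L`, a matrix `L` with `exp L = diagonal v` for pairwise distinct `v i`
is itself diagonal; hence `v i = exp (L i i) > 0`. Both `diag(-1, -2, 1)` and its negative have
distinct diagonal entries, one of them negative.
-/

open NormedSpace

namespace Matrix

variable {n R : Type*} [Fintype n] [DecidableEq n]

theorem eq_diagonal_of_commute_diagonal [CommRing R] [NoZeroDivisors R] {v : n → R}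
    (hv : Function.Injective v) {A : Matrix n n R} (hA : Commute (diagonal v) A) :
    A = diagonal (fun i => A i i) := by
  ext a b
  rcases eq_or_ne a b with rfl | hab
  · simp
  have hentry : v a * A a b = A a b * v b := by
    simpa using congrFun (congrFun hA.eq a) b
  have hzero : (v a - v b) * A a b = 0 := by linear_combination hentry
  rw [diagonal_apply_ne _ hab]
  exact (mul_eq_zero.mp hzero).resolve_left (sub_ne_zero.mpr (hv.ne hab))

theorem pos_of_exp_eq_diagonal {v : n → ℝ} (hv : Function.Injective v) {L : Matrix n n ℝ}
    (hL : exp L = diagonal v) (i : n) : 0 < v i := by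
  have hdiag := eq_diagonal_of_commute_diagonal hv (hL ▸ (Commute.refl L).exp_left)
  rw [hdiag, exp_diagonal, diagonal_eq_diagonal_iff] at hL
  rw [← hL i, Pi.coe_exp, ← Real.exp_eq_exp_ℝ]
  exact Real.exp_pos _

end Matrix

/-- The diagonal matrix `M = diag(-1, -2, 1)` in `M₃(ℝ)` is such that neither `M`
nor `-M` is a real matrix exponential. -/
theorem stmt9 :
    (¬ ∃ L : Matrix (Fin 3) (Fin 3) ℝ,
        NormedSpace.exp L = Matrix.diagonal ![-1, -2, 1]) ∧
    (¬ ∃ L : Matrix (Fin 3) (Fin 3) ℝ,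
        NormedSpace.exp L = -Matrix.diagonal ![-1, -2, 1]) := by
  have hinj : Function.Injective (![-1, -2, 1] : Fin 3 → ℝ) := by
    intro a b h
    fin_cases a <;> fin_cases b <;> first | rfl | norm_num at h
  refine ⟨fun ⟨L, hL⟩ => ?_, fun ⟨L, hL⟩ => ?_⟩
  · have := Matrix.pos_of_exp_eq_diagonal hinj hL 0
    norm_num at this
  · rw [Matrix.diagonal_neg] at hL
    have := Matrix.pos_of_exp_eq_diagonal (neg_injective.comp hinj) hL 2
    simp at this
    norm_num at this
end

section
/- Let n ≥ 1. The set of matrices M ∈ M_n(ℝ) with det M > 0 is exactly the set of finite products e^{M_1} ⋯ e^{M_m} of exponentials of real n×n matrices (with m ≥ 1). -/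
/-!
A matrix of positive determinant lies in `SL(n, ℝ)` after rescaling one column by a positive
number, and a positive diagonal matrix is an exponential. By Gaussian elimination an element of
`SL(n, ℝ)` is a product of transvections `1 + c E_ij = exp (c E_ij)` and of matrices
`diag(c, c⁻¹)` acting on two coordinates. For `c > 0` these are exponentials; for `c < 0` the
remaining sign `diag(-1, -1)` is the square of the quarter-turn `(1 + E_ij)(1 - E_ji)(1 + E_ij)`,
a product of transvections. Conversely `det (exp A) = det (exp (A / 2)) ^ 2 > 0`.
-/

open NormedSpace Matrix

theorem Submonoid.mem_closure_range_iff_exists_list {M α : Type*} [Monoid M] (f : α → M)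
    {x : M} : x ∈ Submonoid.closure (Set.range f) ↔ ∃ l : List α, (l.map f).prod = x := by
  rw [← FreeMonoid.mrange_lift, MonoidHom.mem_mrange]
  exact FreeMonoid.toList.exists_congr_left.trans (by simp [FreeMonoid.lift_apply])

theorem NormedSpace.exp_eq_one_add_of_sq_eq_zero {𝔸 : Type*} [Ring 𝔸] [Algebra ℚ 𝔸]
    [TopologicalSpace 𝔸] [IsTopologicalRing 𝔸] {x : 𝔸} (hx : x ^ 2 = 0) :
    exp x = 1 + x := by
  rw [exp_eq_tsum_rat]
  dsimp only
  rw [tsum_eq_sum (s := Finset.range 2)]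
  · simp [Finset.sum_range_succ]
  · intro k hk
    obtain ⟨m, rfl⟩ := Nat.exists_eq_add_of_le (not_lt.mp (Finset.mem_range.not.mp hk))
    rw [pow_add, hx, zero_mul, smul_zero]

/-- For `a = E₁₂`, `b = E₂₁` this says that the square of a quarter-turn is `-1`. -/
theorem sq_one_add_mul_one_sub_mul_one_add {R : Type*} [Ring R] {a b : R} (ha : a * a = 0)
    (hb : b * b = 0) (haba : a * b * a = a) (hbab : b * a * b = b) :
    ((1 + a) * (1 - b) * (1 + a)) ^ 2 = 1 - 2 * (a * b + b * a) := by
  have ha' (x : R) : a * (a * x) = 0 := by rw [← mul_assoc, ha, zero_mul]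
  have hb' (x : R) : b * (b * x) = 0 := by rw [← mul_assoc, hb, zero_mul]
  rw [mul_assoc] at haba hbab
  simp only [sq, mul_add, add_mul, mul_sub, sub_mul, mul_one, one_mul, mul_assoc, ha, hb, ha',
    hb', haba, hbab, mul_zero, zero_mul, two_mul]
  abel

namespace Matrix

variable {ι : Type*} [Fintype ι] [DecidableEq ι]

theorem det_exp_pos (A : Matrix ι ι ℝ) : 0 < (exp A).det := by
  have hsq : exp A = exp ((2⁻¹ : ℝ) • A) * exp ((2⁻¹ : ℝ) • A) := by
    rw [← exp_add_of_commute _ _ (Commute.refl _), ← add_smul]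
    norm_num
  have hu : IsUnit (exp ((2⁻¹ : ℝ) • A)).det :=
    (isUnit_iff_isUnit_det _).mp (isUnit_exp _)
  rw [hsq, det_mul]
  exact mul_self_pos.mpr hu.ne_zero

theorem exp_single_of_ne {i j : ι} (hij : i ≠ j) (c : ℝ) :
    exp (single i j c) = transvection i j c := by
  have hsq : single i j c ^ 2 = 0 := by
    rw [sq]
    exact single_mul_single_of_ne (h := hij.symm) ..
  rw [exp_eq_one_add_of_sq_eq_zero hsq, transvection]

variable (ι) in
def expProducts : Submonoid (Matrix ι ι ℝ) :=
  Submonoid.closure (Set.range exp)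

theorem mem_expProducts_iff {M : Matrix ι ι ℝ} :
    M ∈ expProducts ι ↔ ∃ l : List (Matrix ι ι ℝ), (l.map exp).prod = M :=
  Submonoid.mem_closure_range_iff_exists_list exp

theorem exp_mem_expProducts (A : Matrix ι ι ℝ) : exp A ∈ expProducts ι :=
  Submonoid.subset_closure ⟨A, rfl⟩

theorem det_pos_of_mem_expProducts {M : Matrix ι ι ℝ} (hM : M ∈ expProducts ι) :
    0 < M.det := by
  induction hM using Submonoid.closure_induction with
  | mem _ h => obtain ⟨A, rfl⟩ := h; exact det_exp_pos A
  | one => simp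
  | mul _ _ _ _ hM hN => rw [det_mul]; exact mul_pos hM hN

theorem transvection_mem_expProducts {i j : ι} (hij : i ≠ j) (c : ℝ) :
    transvection i j c ∈ expProducts ι :=
  exp_single_of_ne hij c ▸ exp_mem_expProducts _

theorem diagonal_mem_expProducts {d : ι → ℝ} (hd : ∀ k, 0 < d k) :
    diagonal d ∈ expProducts ι := by
  have hlog : exp (diagonal fun k => Real.log (d k)) = diagonal d := by
    rw [exp_diagonal]
    congr 1
    funext k
    rw [Pi.exp_def, ← Real.exp_eq_exp_ℝ]
    exact Real.exp_log (hd k)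
  exact hlog ▸ exp_mem_expProducts _

namespace SpecialLinearGroup

theorem diag2n_mul_diag2n {F : Type*} [Field F] {i j : ι} (hij : i ≠ j) {a b : F}
    (ha : a ≠ 0) (hb : b ≠ 0) :
    diag2n hij a ha * diag2n hij b hb = diag2n hij (a * b) (mul_ne_zero ha hb) := by
  ext : 1
  simp only [coe_mul, diag2n_coe, diagonal_mul_diagonal]
  congr 1
  funext k
  split_ifs <;> simp [mul_comm]

theorem coe_diag2n_neg_one_mem_expProducts {i j : ι} (hij : i ≠ j) :
    (diag2n hij (-1 : ℝ) (by norm_num) : Matrix ι ι ℝ) ∈ expProducts ι := by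
  have hrot := sq_one_add_mul_one_sub_mul_one_add (a := single i j (1 : ℝ)) (b := single j i 1)
    (by simp [hij.symm]) (by simp [hij]) (by simp) (by simp)
  have hsign : (diag2n hij (-1 : ℝ) (by norm_num) : Matrix ι ι ℝ) =
      (Matrix.transvection i j 1 * Matrix.transvection j i (-1) *
        Matrix.transvection i j 1) ^ 2 := by
    rw [Matrix.transvection, Matrix.transvection, ← single_neg, ← sub_eq_add_neg, hrot]
    ext a b
    simp only [diag2n_coe, two_mul, sub_apply, add_apply, one_apply, diagonal_apply,
      single_mul_single_same, single_apply]
    split_ifs <;> grind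
  rw [hsign]
  exact pow_mem (mul_mem (mul_mem (transvection_mem_expProducts hij 1)
    (transvection_mem_expProducts hij.symm (-1))) (transvection_mem_expProducts hij 1)) 2

theorem coe_diag2n_mem_expProducts {i j : ι} (hij : i ≠ j) {c : ℝ} (hc : c ≠ 0) :
    (diag2n hij c hc : Matrix ι ι ℝ) ∈ expProducts ι := by
  have of_pos {c : ℝ} (hc : 0 < c) :
      (diag2n hij c hc.ne' : Matrix ι ι ℝ) ∈ expProducts ι := by
    rw [diag2n_coe]
    exact diagonal_mem_expProducts fun k => by split_ifs <;> positivity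
  rcases hc.lt_or_gt with hneg | hpos
  · have hsplit : diag2n hij c hc =
        diag2n hij (-c) (neg_ne_zero.mpr hc) * diag2n hij (-1) (by norm_num) := by
      rw [diag2n_mul_diag2n]
      congr 1
      ring
    rw [hsplit, coe_mul]
    exact mul_mem (of_pos (neg_pos.mpr hneg)) (coe_diag2n_neg_one_mem_expProducts hij)
  · exact of_pos hpos

theorem coe_mem_expProducts (i₀ : ι) (N : SpecialLinearGroup ι ℝ) :
    (N : Matrix ι ι ℝ) ∈ expProducts ι := by
  let S := (expProducts ι).comap coeMonoidHom
  have hlist (L : List (TransvectionStruct ι ℝ)) :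
      (L.map TransvectionStruct.toSpecialLinearGroup).prod ∈ S := by
    refine list_prod_mem fun t ht => ?_
    obtain ⟨t, -, rfl⟩ := List.mem_map.mp ht
    exact transvection_mem_expProducts t.hij t.c
  have hdiag (D : ι → ℝ) (hD : (diagonal D).det = 1) : ⟨diagonal D, hD⟩ ∈ S := by
    rw [diag_eq_diag2n_prod i₀]
    refine Submonoid.noncommProd_mem _ _ _ _ fun i hi => ?_
    have hi₀ : i ≠ i₀ := (Finset.mem_filter.mp hi).2
    rw [dif_pos hi₀]
    exact coe_diag2n_mem_expProducts hi₀ (diagonal_neZero D hD i)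
  obtain ⟨L, L', D, hD, rfl⟩ := exists_list_transvec_mul_diagonal_mul_list_transvec N
  exact mul_mem (mul_mem (hlist L) (hdiag D hD)) (hlist L')

end SpecialLinearGroup

theorem mem_expProducts_of_det_pos [Nonempty ι] {M : Matrix ι ι ℝ} (hM : 0 < M.det) :
    M ∈ expProducts ι := by
  obtain ⟨i₀⟩ := ‹Nonempty ι›
  set D' := diagonal (Pi.mulSingle i₀ M.det⁻¹)
  have hdet : (M * D').det = 1 := by
    rw [det_mul, det_diagonal, Finset.prod_pi_mulSingle', if_pos (Finset.mem_univ _),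
      mul_inv_cancel₀ hM.ne']
  have hsplit : M = M * D' * diagonal (Pi.mulSingle i₀ M.det) := by
    rw [mul_assoc, diagonal_mul_diagonal, ← Pi.mul_def, ← Pi.mulSingle_mul,
      inv_mul_cancel₀ hM.ne', Pi.mulSingle_one, Pi.one_def, diagonal_one, mul_one]
  have hpos (k : ι) : 0 < (Pi.mulSingle i₀ M.det : ι → ℝ) k := by
    rcases eq_or_ne k i₀ with rfl | hk
    · simpa using hM
    · simp [hk]
  rw [hsplit]
  exact mul_mem (SpecialLinearGroup.coe_mem_expProducts i₀ ⟨M * D', hdet⟩)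
    (diagonal_mem_expProducts hpos)

theorem mem_expProducts_iff_det_pos [Nonempty ι] {M : Matrix ι ι ℝ} :
    M ∈ expProducts ι ↔ 0 < M.det :=
  ⟨det_pos_of_mem_expProducts, mem_expProducts_of_det_pos⟩

end Matrix

/-- For `n ≥ 1`, the set of real `n × n` matrices with positive determinant is exactly
the set of finite products `e^{M₁} ⋯ e^{Mₘ}` (`m ≥ 1`) of real matrix exponentials. -/
theorem stmt11 {n : ℕ} (hn : 1 ≤ n) :
    {M : Matrix (Fin n) (Fin n) ℝ | 0 < M.det} =
      {M : Matrix (Fin n) (Fin n) ℝ |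
        ∃ l : List (Matrix (Fin n) (Fin n) ℝ), l ≠ [] ∧
          M = (l.map NormedSpace.exp).prod} := by
  have : Nonempty (Fin n) := ⟨⟨0, hn⟩⟩
  ext M
  rw [Set.mem_ofPred_eq, Set.mem_ofPred_eq, ← mem_expProducts_iff_det_pos, mem_expProducts_iff]
  constructor
  · rintro ⟨l, rfl⟩
    exact ⟨0 :: l, List.cons_ne_nil _ _, by simp⟩
  · rintro ⟨l, -, rfl⟩
    exact ⟨l, rfl⟩
end

section
/- Let M ∈ M_n(ℝ) and suppose M admits k real eigenvalues λ_1, …, λ_k (listed with multiplicity, 1 ≤ k ≤ n). Then there exists an orthogonal matrix Q ∈ M_n(ℝ) such that the matrix Qᵀ M Q has (i, i)-entry equal to λ_i for 1 ≤ i ≤ k, and has (i, j)-entry equal to 0 whenever j ≤ k and i > j (i.e. its first k columns vanish below the diagonal). -/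
/-!
Induction on `k`. A real root `λ₁` of the characteristic polynomial has a real unit eigenvector;
completing it to an orthonormal basis gives an orthogonal `Q₀` for which `Q₀ᵀ M Q₀` has first
column `λ₁ e₁`. Expanding along that column, the lower-right block `B` satisfies
`charpoly M = (X - λ₁) · charpoly B`, so `B` still carries `λ₂, …, λ_k`; conjugating by `1 ⊕ Q₁`,
with `Q₁` obtained inductively for `B`, keeps the first column and puts `Q₁ᵀ B Q₁` in the lower
block.
-/

open Matrix Polynomial

namespace Matrix

section Charpoly

variable {R : Type*} [CommRing R]

theorem charpoly_transpose_mul_mul_of_transpose_mul_self_eq_one {n : Type*} [Fintype n]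
    [DecidableEq n] (M : Matrix n n R) {Q : Matrix n n R} (hQ : Qᵀ * Q = 1) :
    (Qᵀ * M * Q).charpoly = M.charpoly := by
  rw [charpoly_mul_comm, ← Matrix.mul_assoc, mul_eq_one_comm.mp hQ, Matrix.one_mul]

theorem charmatrix_submatrix {m n : Type*} [Fintype m] [DecidableEq m] [Fintype n]
    [DecidableEq n] (A : Matrix n n R) {f : m → n} (hf : Function.Injective f) :
    charmatrix (A.submatrix f f) = (charmatrix A).submatrix f f := by
  ext i j : 1
  obtain rfl | hij := eq_or_ne i j
  · simp
  · simp [hij, charmatrix_apply_ne _ _ _ (hf.ne hij)]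

theorem charpoly_eq_X_sub_C_mul_charpoly_submatrix_succ {m : ℕ}
    (A : Matrix (Fin (m + 1)) (Fin (m + 1)) R) (hA : ∀ i, i ≠ 0 → A i 0 = 0) :
    A.charpoly = (X - C (A 0 0)) * (A.submatrix Fin.succ Fin.succ).charpoly := by
  rw [charpoly, det_succ_column_zero, Fin.sum_univ_succ, Finset.sum_eq_zero, add_zero]
  · simp [charpoly, charmatrix_submatrix _ (Fin.succ_injective m)]
  · intro i _
    simp [hA]

end Charpoly

section Orthogonal

variable {ι : Type*} [Fintype ι] [DecidableEq ι]

theorem exists_transpose_mul_self_eq_one_col_eq (u : EuclideanSpace ℝ ι) (hu : ‖u‖ = 1)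
    (i₀ : ι) :
    ∃ Q : Matrix ι ι ℝ, Qᵀ * Q = 1 ∧ ∀ i, Q i i₀ = u i := by
  have hu' : Orthonormal ℝ (({i₀} : Set ι).domRestrict fun _ => u) :=
    ⟨fun _ => hu, fun i j hij => absurd (Subsingleton.elim i j) hij⟩
  obtain ⟨b, hb⟩ := hu'.exists_orthonormalBasis_extension_of_card_eq (by simp)
  refine ⟨(EuclideanSpace.basisFun ι ℝ).toBasis.toMatrix b,
    (mem_orthogonalGroup_iff' ι ℝ).mp
      (OrthonormalBasis.toMatrix_orthonormalBasis_mem_orthogonal _ _),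
    fun i => ?_⟩
  simp [Module.Basis.toMatrix_apply, hb i₀ rfl]

theorem transpose_mul_mul_apply_eq_single_of_mulVec_eq_smul {M Q : Matrix ι ι ℝ}
    (hQ : Qᵀ * Q = 1) {μ : ℝ} {v : ι → ℝ} (hv : M *ᵥ v = μ • v) {i₀ : ι}
    (hQv : ∀ i, Q i i₀ = v i) (i : ι) :
    (Qᵀ * M * Q) i i₀ = (Pi.single i₀ μ : ι → ℝ) i := by
  have hQe : Q *ᵥ Pi.single i₀ 1 = v := by ext i; simp [hQv]
  have : (Qᵀ * M * Q) *ᵥ Pi.single i₀ 1 = μ • Pi.single i₀ 1 := by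
    rw [← mulVec_mulVec, hQe, ← mulVec_mulVec, hv, mulVec_smul, ← hQe, mulVec_mulVec, hQ,
      one_mulVec]
  simpa [Pi.single_apply] using congrFun this i

theorem exists_mulVec_eq_smul_of_isRoot_charpoly {M : Matrix ι ι ℝ} {μ : ℝ}
    (hμ : M.charpoly.IsRoot μ) : ∃ v ≠ 0, M *ᵥ v = μ • v := by
  rw [IsRoot, eval_charpoly] at hμ
  obtain ⟨v, hv0, hv⟩ := exists_mulVec_eq_zero_iff.mpr hμ
  refine ⟨v, hv0, ?_⟩
  rw [sub_mulVec, sub_eq_zero, scalar_apply, ← smul_one_eq_diagonal, smul_mulVec,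
    one_mulVec] at hv
  exact hv.symm

theorem exists_transpose_mul_self_eq_one_conj_apply_eq_single {M : Matrix ι ι ℝ} {μ : ℝ}
    (hμ : M.charpoly.IsRoot μ) (i₀ : ι) :
    ∃ Q : Matrix ι ι ℝ, Qᵀ * Q = 1 ∧ ∀ i, (Qᵀ * M * Q) i i₀ = (Pi.single i₀ μ : ι → ℝ) i := by
  obtain ⟨v, hv0, hv⟩ := exists_mulVec_eq_smul_of_isRoot_charpoly hμ
  set u : EuclideanSpace ℝ ι := ‖WithLp.toLp 2 v‖⁻¹ • WithLp.toLp 2 v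
  have hu : ‖u‖ = 1 := norm_smul_inv_norm (by simpa using hv0)
  obtain ⟨Q, hQ, hQu⟩ := exists_transpose_mul_self_eq_one_col_eq u hu i₀
  refine ⟨Q, hQ, transpose_mul_mul_apply_eq_single_of_mulVec_eq_smul hQ ?_ hQu⟩
  simp [u, mulVec_smul, hv, smul_comm μ]

end Orthogonal

section OneDirectSum

variable {R : Type*} {m : ℕ}

def oneDirectSum [Zero R] [One R] (Q : Matrix (Fin m) (Fin m) R) :
    Matrix (Fin (m + 1)) (Fin (m + 1)) R :=
  of (Fin.cons (Pi.single 0 1) fun i => Fin.cons 0 (Q i))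

section ZeroOne

variable [Zero R] [One R] (Q : Matrix (Fin m) (Fin m) R) (i j : Fin m)

@[simp] theorem oneDirectSum_zero_zero : oneDirectSum Q 0 0 = 1 := by simp [oneDirectSum]
@[simp] theorem oneDirectSum_zero_succ : oneDirectSum Q 0 j.succ = 0 := by simp [oneDirectSum]
@[simp] theorem oneDirectSum_succ_zero : oneDirectSum Q i.succ 0 = 0 := by simp [oneDirectSum]
@[simp] theorem oneDirectSum_succ_succ : oneDirectSum Q i.succ j.succ = Q i j := by
  simp [oneDirectSum]

theorem transpose_oneDirectSum : (oneDirectSum Q)ᵀ = oneDirectSum Qᵀ := by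
  ext i j
  cases i using Fin.cases <;> cases j using Fin.cases <;> simp

end ZeroOne

variable [NonAssocSemiring R]

theorem oneDirectSum_mul_oneDirectSum (P Q : Matrix (Fin m) (Fin m) R) :
    oneDirectSum P * oneDirectSum Q = oneDirectSum (P * Q) := by
  ext i j
  cases i using Fin.cases <;> cases j using Fin.cases <;> simp [mul_apply, Fin.sum_univ_succ]

@[simp] theorem oneDirectSum_one : oneDirectSum (1 : Matrix (Fin m) (Fin m) R) = 1 := by
  ext i j
  cases i using Fin.cases <;> cases j using Fin.cases <;>
    simp [one_apply, (Fin.succ_ne_zero _).symm]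

theorem submatrix_succ_oneDirectSum_mul_mul (P Q : Matrix (Fin m) (Fin m) R)
    (A : Matrix (Fin (m + 1)) (Fin (m + 1)) R) :
    (oneDirectSum P * A * oneDirectSum Q).submatrix Fin.succ Fin.succ
      = P * A.submatrix Fin.succ Fin.succ * Q := by
  ext i j
  simp [mul_apply, Fin.sum_univ_succ]

theorem oneDirectSum_mul_mul_apply_zero (P Q : Matrix (Fin m) (Fin m) R)
    {A : Matrix (Fin (m + 1)) (Fin (m + 1)) R} {a : R}
    (hA : ∀ i, A i 0 = (Pi.single 0 a : Fin (m + 1) → R) i) (i : Fin (m + 1)) :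
    (oneDirectSum P * A * oneDirectSum Q) i 0 = (Pi.single 0 a : Fin (m + 1) → R) i := by
  cases i using Fin.cases <;> simp [mul_apply, Fin.sum_univ_succ, hA]

end OneDirectSum

section PartialSchurForm

variable {R : Type*} [Zero R]

def IsPartialSchurForm {n k : ℕ} (A : Matrix (Fin n) (Fin n) R) (lam : Fin k → R) : Prop :=
  (∀ (i : Fin n) (hi : (i : ℕ) < k), A i i = lam ⟨i, hi⟩) ∧
    ∀ i j : Fin n, (j : ℕ) < k → (j : ℕ) < (i : ℕ) → A i j = 0

theorem isPartialSchurForm_zero {n : ℕ} (A : Matrix (Fin n) (Fin n) R) (lam : Fin 0 → R) :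
    IsPartialSchurForm A lam :=
  ⟨fun _ hi => absurd hi (Nat.not_lt_zero _), fun _ _ hj => absurd hj (Nat.not_lt_zero _)⟩

theorem IsPartialSchurForm.of_submatrix_succ {m k : ℕ}
    {A : Matrix (Fin (m + 1)) (Fin (m + 1)) R} {lam : Fin (k + 1) → R}
    (hA : ∀ i, A i 0 = (Pi.single 0 (lam 0) : Fin (m + 1) → R) i)
    (h : IsPartialSchurForm (A.submatrix Fin.succ Fin.succ) (Fin.tail lam)) :
    IsPartialSchurForm A lam := by
  refine ⟨fun i hi => ?_, fun i j hj hji => ?_⟩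
  · cases i using Fin.cases with
    | zero => simpa using hA 0
    | succ i => exact (h.1 i (by simpa using hi)).trans (congrArg lam (Fin.ext rfl))
  · cases j using Fin.cases with
    | zero => simpa [(Fin.pos_iff_ne_zero' i).mp hji] using hA i
    | succ j =>
      cases i using Fin.cases with
      | zero => simp at hji
      | succ i => simpa using h.2 i j (by simpa using hj) (by simpa using hji)

end PartialSchurForm

theorem exists_transpose_mul_self_eq_one_isPartialSchurForm :
    ∀ {k n : ℕ} (M : Matrix (Fin n) (Fin n) ℝ) (lam : Fin k → ℝ), k ≤ n →
      (∏ i, (X - C (lam i))) ∣ M.charpoly →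
      ∃ Q : Matrix (Fin n) (Fin n) ℝ, Qᵀ * Q = 1 ∧ IsPartialSchurForm (Qᵀ * M * Q) lam
  | 0, _, _, lam, _, _ => ⟨1, by simp, isPartialSchurForm_zero _ lam⟩
  | k + 1, n, M, lam, hkn, hdvd => by
    obtain ⟨m, rfl⟩ : ∃ m, n = m + 1 := ⟨n - 1, by omega⟩
    rw [Fin.prod_univ_succ] at hdvd
    have hroot : M.charpoly.IsRoot (lam 0) :=
      dvd_iff_isRoot.mp (dvd_of_mul_right_dvd hdvd)
    obtain ⟨Q₀, hQ₀, hcol⟩ := exists_transpose_mul_self_eq_one_conj_apply_eq_single hroot 0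
    set A := Q₀ᵀ * M * Q₀
    have hA00 : A 0 0 = lam 0 := by simpa using hcol 0
    have hAchar : A.charpoly = (X - C (lam 0)) * (A.submatrix Fin.succ Fin.succ).charpoly := by
      rw [charpoly_eq_X_sub_C_mul_charpoly_submatrix_succ A
        fun i hi => by simpa [hi] using hcol i, hA00]
    rw [← charpoly_transpose_mul_mul_of_transpose_mul_self_eq_one M hQ₀, hAchar,
      mul_dvd_mul_iff_left (X_sub_C_ne_zero _)] at hdvd
    obtain ⟨Q₁, hQ₁, hB⟩ :=
      exists_transpose_mul_self_eq_one_isPartialSchurForm _ (Fin.tail lam) (by omega) hdvd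
    refine ⟨Q₀ * oneDirectSum Q₁, ?_, ?_⟩
    · rw [transpose_mul, Matrix.mul_assoc, ← Matrix.mul_assoc Q₀ᵀ, hQ₀, Matrix.one_mul,
        transpose_oneDirectSum, oneDirectSum_mul_oneDirectSum, hQ₁, oneDirectSum_one]
    · have hconj : (Q₀ * oneDirectSum Q₁)ᵀ * M * (Q₀ * oneDirectSum Q₁)
          = oneDirectSum Q₁ᵀ * A * oneDirectSum Q₁ := by
        simp only [A, transpose_mul, transpose_oneDirectSum, Matrix.mul_assoc]
      rw [hconj]
      refine IsPartialSchurForm.of_submatrix_succ (oneDirectSum_mul_mul_apply_zero _ _ hcol) ?_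
      rwa [submatrix_succ_oneDirectSum_mul_mul]

end Matrix

theorem stmt13_general {n : ℕ} (M : Matrix (Fin n) (Fin n) ℝ) (k : ℕ) (hkn : k ≤ n)
    (lam : Fin k → ℝ)
    (heig : ∃ q : Polynomial ℝ,
      M.charpoly = (∏ i : Fin k, (Polynomial.X - Polynomial.C (lam i))) * q) :
    ∃ Q : Matrix (Fin n) (Fin n) ℝ, Qᵀ * Q = 1 ∧
      (∀ (i : Fin n) (hi : (i : ℕ) < k), (Qᵀ * M * Q) i i = lam ⟨i, hi⟩) ∧
      (∀ i j : Fin n, (j : ℕ) < k → (j : ℕ) < (i : ℕ) → (Qᵀ * M * Q) i j = 0) :=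
  exists_transpose_mul_self_eq_one_isPartialSchurForm M lam hkn heig

/-- Weak Schur reduction: if `M ∈ Mₙ(ℝ)` admits `k` real eigenvalues `λ₁, …, λ_k`
(counted with multiplicity, i.e. `∏ (X - λᵢ)` divides the characteristic polynomial,
`1 ≤ k ≤ n`), then there is an orthogonal `Q` such that `Qᵀ M Q` has `(i,i)`-entry `λᵢ`
for `i ≤ k` and its first `k` columns vanish below the diagonal. -/
theorem stmt13 {n : ℕ} (M : Matrix (Fin n) (Fin n) ℝ) (k : ℕ) (hk1 : 1 ≤ k) (hkn : k ≤ n)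
    (lam : Fin k → ℝ)
    (heig : ∃ q : Polynomial ℝ,
      M.charpoly = (∏ i : Fin k, (Polynomial.X - Polynomial.C (lam i))) * q) :
    ∃ Q : Matrix (Fin n) (Fin n) ℝ, Qᵀ * Q = 1 ∧
      (∀ (i : Fin n) (hi : (i : ℕ) < k), (Qᵀ * M * Q) i i = lam ⟨i, hi⟩) ∧
      (∀ i j : Fin n, (j : ℕ) < k → (j : ℕ) < (i : ℕ) → (Qᵀ * M * Q) i j = 0) :=
  stmt13_general M k hkn lam heig
end

section
/- Let A ∈ M_n(ℝ) be invertible. Then the (2n)×(2n) block-diagonal matrix M with two diagonal blocks equal to A (and zero off-diagonal blocks) has a logarithm in M_{2n}(ℝ): there exists B ∈ M_{2n}(ℝ) with e^B = M. -/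
/-!
Over `ℂ` every invertible matrix `M` has a logarithm. Write `M = N + S` (Jordan–Chevalley) with
`N` nilpotent, `S` semisimple and both polynomials in `M`; then `S` is invertible. A logarithm
of `S` is `P(S)` for a polynomial `P` interpolating `log` at the eigenvalues of `S`, and a
logarithm of the unipotent matrix `1 + S⁻¹N` is the truncated series of `log (1 + X)` evaluated
at `S⁻¹N`, by the formal identity `exp (log (1 + X)) ≡ 1 + X` modulo `X ^ d`. These two
logarithms commute, so their sum is a logarithm of `M`.

Viewing a complex `n × n` matrix as a real `2n × 2n` matrix is a continuous `ℝ`-algebra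
homomorphism, hence commutes with `exp`. Applied to a complex logarithm of a real `A` it gives a
real logarithm of the block matrix `diag(A, A)`.
-/

open Polynomial Finset NormedSpace
open scoped Nat

namespace Polynomial

noncomputable def logOneAddTrunc (d : ℕ) : ℚ[X] :=
  ∑ i ∈ range d, C ((-1 : ℚ) ^ i / (i + 1)) * X ^ (i + 1)

noncomputable def expTrunc (d : ℕ) (p : ℚ[X]) : ℚ[X] :=
  ∑ j ∈ range d, C (j ! : ℚ)⁻¹ * p ^ j

theorem X_dvd_logOneAddTrunc (d : ℕ) : X ∣ logOneAddTrunc d :=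
  dvd_sum fun i _ => (dvd_pow_self X i.succ_ne_zero).mul_left _

theorem one_add_X_mul_derivative_logOneAddTrunc (d : ℕ) :
    (1 + X) * derivative (logOneAddTrunc d) = 1 - (-X) ^ d := by
  have hderiv : derivative (logOneAddTrunc d) = ∑ i ∈ range d, (-X) ^ i := by
    simp only [logOneAddTrunc, derivative_sum, derivative_C_mul_X_pow, Nat.add_sub_cancel]
    refine sum_congr rfl fun i _ => ?_
    have hc : (-1 : ℚ) ^ i / (i + 1) * ↑(i + 1) = (-1) ^ i := by push_cast; field_simp
    rw [hc, neg_pow (X : ℚ[X]), map_pow, map_neg, map_one, mul_comm]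
  rw [hderiv]
  linear_combination -geom_sum_mul (-X : ℚ[X]) d

theorem derivative_expTrunc_succ (d : ℕ) (p : ℚ[X]) :
    derivative (expTrunc (d + 1) p) = derivative p * expTrunc d p := by
  rw [expTrunc, sum_range_succ', expTrunc, mul_sum]
  simp only [derivative_add, derivative_sum, derivative_C_mul, derivative_pow, pow_zero, mul_one,
    derivative_C, add_zero, Nat.add_sub_cancel]
  refine sum_congr rfl fun j _ => ?_
  have hc : (((j + 1) * j ! : ℕ) : ℚ)⁻¹ * ((j + 1 : ℕ) : ℚ) = (j ! : ℚ)⁻¹ := by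
    push_cast
    field_simp
  rw [Nat.factorial_succ, ← hc, C_mul]
  ring

theorem X_pow_dvd_of_X_pow_dvd_one_add_X_mul_derivative_sub {R : Type*} [CommRing R]
    [NoZeroDivisors R] [CharZero R] {h : R[X]} {d : ℕ} (h0 : h.coeff 0 = 0)
    (hd : X ^ d ∣ (1 + X) * derivative h - h) : X ^ d ∣ h := by
  rw [X_pow_dvd_iff] at hd ⊢
  intro r
  induction r with
  | zero => exact fun _ => h0
  | succ r ih =>
    intro hr
    have hrec := hd r (by omega)
    have hXmul : (X * derivative h).coeff r = r * h.coeff r := by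
      cases r with
      | zero => simp
      | succ k => rw [coeff_X_mul, coeff_derivative]; push_cast; ring
    rw [add_mul, one_mul, coeff_sub, coeff_add, hXmul, coeff_derivative, ih (by omega)] at hrec
    simpa [Nat.cast_add_one_ne_zero] using hrec

theorem X_pow_dvd_expTrunc_logOneAddTrunc_sub (d : ℕ) :
    X ^ d ∣ expTrunc (d + 1) (logOneAddTrunc d) - 1 - X := by
  set ℓ := logOneAddTrunc d
  set E := expTrunc (d + 1) ℓ
  have hℓ0 : ℓ.eval 0 = 0 := by
    rw [← coeff_zero_eq_eval_zero, ← X_dvd_iff]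
    exact X_dvd_logOneAddTrunc d
  -- `E` truncates `exp (log (1 + X))`, which solves `(1 + X) E' = E`.
  apply X_pow_dvd_of_X_pow_dvd_one_add_X_mul_derivative_sub
  · simp [E, expTrunc, coeff_zero_eq_eval_zero, eval_finsetSum, hℓ0, sum_range_succ']
  · have hE : (1 + X) * derivative (E - 1 - X) - (E - 1 - X)
        = -((-X) ^ d * E) - (1 - (-X) ^ d) * (C (d ! : ℚ)⁻¹ * ℓ ^ d) := by
      have hsplit : E = expTrunc d ℓ + C (d ! : ℚ)⁻¹ * ℓ ^ d := sum_range_succ _ _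
      rw [derivative_sub, derivative_sub, derivative_one, derivative_X, derivative_expTrunc_succ]
      linear_combination expTrunc d ℓ * one_add_X_mul_derivative_logOneAddTrunc d
        + ((-X) ^ d - 1) * hsplit
    have hXd : X ^ d ∣ (-X : ℚ[X]) ^ d := by rw [neg_pow]; exact dvd_mul_left _ _
    rw [hE]
    exact dvd_sub (dvd_neg.mpr (hXd.mul_right _))
      (((pow_dvd_pow_of_dvd (X_dvd_logOneAddTrunc d) d).mul_left _).mul_left _)

end Polynomial

namespace NormedSpace

variable {𝔸 : Type*} [Ring 𝔸] [Algebra ℚ 𝔸] [TopologicalSpace 𝔸] [IsTopologicalRing 𝔸]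

theorem exp_eq_sum_of_pow_eq_zero {x : 𝔸} {k : ℕ} (hx : x ^ k = 0) :
    exp x = ∑ i ∈ range k, (i ! : ℚ)⁻¹ • x ^ i := by
  rw [exp_eq_tsum_rat]
  refine tsum_eq_sum fun i hi => ?_
  rw [pow_eq_zero_of_le (by simpa using hi) hx, smul_zero]

theorem exists_mem_adjoin_exp_eq_one_add {N : 𝔸} (hN : IsNilpotent N) :
    ∃ L ∈ Algebra.adjoin ℚ {N}, exp L = 1 + N := by
  obtain ⟨d, hd⟩ := hN
  obtain ⟨q, hq⟩ := X_dvd_logOneAddTrunc d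
  obtain ⟨r, hr⟩ := X_pow_dvd_expTrunc_logOneAddTrunc_sub d
  set L := aeval N (logOneAddTrunc d)
  have hL : L ^ (d + 1) = 0 := by
    rw [← map_pow, hq, mul_pow, map_mul, map_pow, aeval_X, pow_eq_zero_of_le d.le_succ hd, zero_mul]
  refine ⟨L, aeval_mem_adjoin_singleton ℚ N, ?_⟩
  have hexp : exp L = aeval N (expTrunc (d + 1) (logOneAddTrunc d)) := by
    simp only [exp_eq_sum_of_pow_eq_zero hL, expTrunc, map_sum, map_mul, map_pow, aeval_C,
      Algebra.smul_def, L]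
  rw [hexp, show expTrunc (d + 1) (logOneAddTrunc d) = 1 + X + X ^ d * r by
    linear_combination hr]
  simp [hd]

end NormedSpace

namespace Matrix

variable {m : Type*} [Fintype m] [DecidableEq m]

theorem pow_mulVec_of_mulVec_eq_smul {R : Type*} [CommSemiring R] {L : Matrix m m R} {μ : R}
    {v : m → R} (hv : L *ᵥ v = μ • v) (k : ℕ) : L ^ k *ᵥ v = μ ^ k • v := by
  induction k with
  | zero => simp
  | succ k ih => rw [pow_succ', ← mulVec_mulVec, ih, mulVec_smul, hv, smul_smul, ← pow_succ]

open scoped Matrix.Norms.Operator in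
theorem exp_mulVec_of_mulVec_eq_smul {𝕂 : Type*} [RCLike 𝕂] {L : Matrix m m 𝕂} {μ : 𝕂}
    {v : m → 𝕂} (hv : L *ᵥ v = μ • v) : exp L *ᵥ v = exp μ • v := by
  have hL := (exp_series_hasSum_exp' (𝕂 := 𝕂) L).map (mulVec.addMonoidHomLeft v)
    (continuous_id.matrix_mulVec continuous_const)
  refine hL.unique ?_
  convert (exp_series_hasSum_exp' (𝕂 := 𝕂) μ).smul_const v using 1
  ext k : 1
  show ((k ! : 𝕂)⁻¹ • L ^ k) *ᵥ v = _
  rw [smul_mulVec, pow_mulVec_of_mulVec_eq_smul hv, smul_smul, smul_eq_mul]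

theorem exists_mem_adjoin_exp_eq_of_isSemisimple {S : Matrix m m ℂ} (hS : IsUnit S)
    (hss : Module.End.IsSemisimple (toLin' S)) : ∃ L ∈ Algebra.adjoin ℂ {S}, exp L = S := by
  set f : Module.End ℂ (m → ℂ) := toLin' S
  -- `aeval S P` acts as `log μ` on each eigenspace of `S`, and these eigenspaces span.
  set P := Lagrange.interpolate (minpoly ℂ f).roots.toFinset id Complex.log
  refine ⟨aeval S P, aeval_mem_adjoin_singleton ℂ S, toLin'.injective ?_⟩
  rw [← LinearMap.eqLocus_eq_top, eq_top_iff, ← hss.iSup_eigenspace_eq_top]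
  refine iSup_le fun μ => ?_
  by_cases hμ : f.HasEigenvalue μ
  swap
  · simp [Module.End.hasEigenvalue_iff.not_left.mp hμ]
  intro x hx
  have hSx : f x = μ • x := Module.End.mem_eigenspace_iff.mp hx
  have hμ0 : μ ≠ 0 := by
    rintro rfl
    exact spectrum.zero_notMem ℂ (hS.map toLinAlgEquiv') hμ.mem_spectrum
  have hPμ : P.eval μ = Complex.log μ :=
    Lagrange.eval_interpolate_at_node _ (Set.injOn_id _) <| Multiset.mem_toFinset.mpr <|
      (mem_roots (minpoly.ne_zero_of_finite ℂ f)).mpr (Module.End.isRoot_of_hasEigenvalue hμ)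
  have hLx : aeval S P *ᵥ x = Complex.log μ • x := by
    rw [← hPμ, ← Module.End.aeval_apply_of_mem_apply_eq_smul hSx, ← toLin'_apply]
    exact LinearMap.congr_fun (aeval_algHom_apply toLinAlgEquiv' S P).symm x
  show toLin' (exp _) x = f x
  rw [toLin'_apply, exp_mulVec_of_mulVec_eq_smul hLx, ← Complex.exp_eq_exp_ℂ, Complex.exp_log hμ0,
    hSx]

theorem exists_isNilpotent_isSemisimple {K : Type*} [Field K] [PerfectField K] (M : Matrix m m K) :
    ∃ N ∈ Algebra.adjoin K {M}, ∃ S ∈ Algebra.adjoin K {M},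
      IsNilpotent N ∧ Module.End.IsSemisimple (toLin' S) ∧ M = N + S := by
  obtain ⟨n, hn, s, hs, hnil, hss, hsum⟩ :=
    Module.End.exists_isNilpotent_isSemisimple (f := toLinAlgEquiv' M)
  rw [Algebra.adjoin_singleton_eq_range_aeval] at hn hs ⊢
  obtain ⟨p, rfl⟩ := hn
  obtain ⟨q, rfl⟩ := hs
  simp only [AlgHom.toRingHom_eq_coe, RingHom.coe_coe, aeval_algHom_apply] at hnil hss hsum
  refine ⟨aeval M p, ⟨p, rfl⟩, aeval M q, ⟨q, rfl⟩, ?_, hss, ?_⟩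
  · exact (IsNilpotent.map_iff toLinAlgEquiv'.injective).mp hnil
  · exact toLinAlgEquiv'.injective (by rwa [map_add])

theorem exists_exp_eq_of_isUnit {M : Matrix m m ℂ} (hM : IsUnit M) : ∃ L, exp L = M := by
  obtain ⟨N, hN, S, hS, hNnil, hSss, rfl⟩ := M.exists_isNilpotent_isSemisimple
  have hNS : Commute N S := Algebra.commute_of_mem_adjoin_singleton_of_commute hS
    (Algebra.commute_of_mem_adjoin_self hN).symm
  have hSunit : IsUnit S := by
    simpa using hNnil.neg.isUnit_add_left_of_commute hM ((Commute.refl N).add_right hNS).neg_left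
  have hS'N : Commute (↑hSunit.unit⁻¹ : Matrix m m ℂ) N := Commute.units_inv_left hNS.symm
  obtain ⟨L₁, hL₁, hexp₁⟩ := exists_mem_adjoin_exp_eq_of_isSemisimple hSunit hSss
  obtain ⟨L₂, hL₂, hexp₂⟩ := exists_mem_adjoin_exp_eq_one_add (hS'N.isNilpotent_mul_left hNnil)
  have hSL₂ : Commute S L₂ := Algebra.commute_of_mem_adjoin_singleton_of_commute hL₂
    ((Commute.refl S).units_inv_right.mul_right hNS.symm)
  have hL : Commute L₁ L₂ := (Algebra.commute_of_mem_adjoin_singleton_of_commute hL₁ hSL₂.symm).symm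
  refine ⟨L₁ + L₂, ?_⟩
  rw [exp_add_of_commute L₁ L₂ hL, hexp₁, hexp₂, mul_add, mul_one, ← mul_assoc, hSunit.mul_val_inv,
    one_mul, add_comm]

-- `M = A + iB` acting on `ℂⁿ = ℝⁿ ⊕ ℝⁿ` is the real block matrix `[[A, -B], [B, A]]`.
noncomputable def realify : Matrix m m ℂ →ₐ[ℝ] Matrix (m ⊕ m) (m ⊕ m) ℝ :=
  AlgHom.ofLinearMap
    { toFun := fun M => fromBlocks (M.map Complex.re) (-M.map Complex.im) (M.map Complex.im)
        (M.map Complex.re)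
      map_add' := fun M N => by ext (i | i) (j | j) <;> simp [add_comm]
      map_smul' := fun c M => by ext (i | i) (j | j) <;> simp }
    (by ext (i | i) (j | j) <;> simp [one_apply, apply_ite])
    (fun M N => by
      ext (i | i) (j | j) <;>
        simp [mul_apply, Finset.sum_sub_distrib, Finset.sum_add_distrib] <;> ring)

theorem realify_map_ofReal (A : Matrix m m ℝ) :
    realify (A.map ((↑) : ℝ → ℂ)) = fromBlocks A 0 0 A := by
  ext (i | i) (j | j) <;> simp [realify]

theorem continuous_realify : Continuous (realify (m := m)) :=
  realify.toLinearMap.continuous_of_finiteDimensional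

open scoped Matrix.Norms.Operator in
theorem exp_realify (L : Matrix m m ℂ) : exp (realify L) = realify (exp L) :=
  (map_exp realify continuous_realify L).symm

end Matrix

/-- If `A ∈ Mₙ(ℝ)` is invertible, then the `2n × 2n` block-diagonal matrix with two
diagonal blocks equal to `A` has a real logarithm. -/
theorem stmt17 {n : ℕ} (A : Matrix (Fin n) (Fin n) ℝ) (hA : IsUnit A) :
    ∃ B : Matrix (Fin n ⊕ Fin n) (Fin n ⊕ Fin n) ℝ,
      NormedSpace.exp B = Matrix.fromBlocks A 0 0 A := by
  obtain ⟨L, hL⟩ := Matrix.exists_exp_eq_of_isUnit (hA.map Complex.ofRealHom.mapMatrix)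
  refine ⟨Matrix.realify L, ?_⟩
  rw [Matrix.exp_realify, hL]
  exact Matrix.realify_map_ofReal A
end
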